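/- arXiv:2605.27665 — 3 statements merged into one kernel-verified Lean document; each statement's English description precedes it below -/
import Mathlib

section
/- If X is a connected metric space and \mu is a doubling measure on X, then there exist constants c > 0 and \alpha > 0, depending only on the doubling constant c_\mu, such that \mu(B(x_0,r))/\mu(B(x_0,R)) \leq c (r/R)^\alpha for every x_0 \in X and 0 < r < R < (1/3)\,\mathrm{diam}(X). -/
/-!
A connected space has points at every distance up to half its diameter, so the ball `B(x, 3t)`
contains, besides `B(x, t)`, a disjoint ball `B(y, t/2)` centred at a point `y` with
`d(x, y) = 2t`. Three doublings from `B(y, t/2)` cover `B(x, t)`, so `B(y, t/2)` carries at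
least a `c_μ⁻³` share of its measure: `μ B(x, 3t) ≥ (1 + c_μ⁻³) μ B(x, t)`. Iterating this
`n ≈ log₃ (R/r)` times gives the power law with `α = log₃ (1 + c_μ⁻³)`.
-/

open MeasureTheory Metric Set
open scoped ENNReal

section PseudoMetricSpace

variable {X : Type*} [PseudoMetricSpace X]

theorem exists_lt_dist_of_ofReal_lt_ediam (x : X) {s : ℝ}
    (hs : ENNReal.ofReal s < ediam (univ : Set X)) : ∃ w, s / 2 < dist x w := by
  by_contra! hnear
  refine hs.not_ge (ediam_le fun a _ b _ => ?_)
  rw [edist_dist]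
  refine ENNReal.ofReal_le_ofReal ?_
  linarith [dist_triangle_left a b x, hnear a, hnear b]

theorem exists_dist_eq_of_le_dist [PreconnectedSpace X] {x w : X} {s : ℝ} (hs : 0 ≤ s)
    (hsw : s ≤ dist x w) : ∃ y, dist x y = s :=
  intermediate_value_univ x w (continuous_const.dist continuous_id) ⟨by simpa using hs, hsw⟩

end PseudoMetricSpace

def IsDoubling {X : Type*} [PseudoMetricSpace X] [MeasurableSpace X] (μ : Measure X)
    (C : ℝ≥0∞) : Prop :=
  ∀ (x : X) (r : ℝ), 0 < r → μ (ball x (2 * r)) ≤ C * μ (ball x r)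

namespace IsDoubling

variable {X : Type*} [PseudoMetricSpace X] [MeasurableSpace X] {μ : Measure X} {C : ℝ≥0∞}

theorem measure_ball_two_pow_mul_le (hμ : IsDoubling μ C) (x : X) {r : ℝ} (hr : 0 < r) (n : ℕ) :
    μ (ball x (2 ^ n * r)) ≤ C ^ n * μ (ball x r) := by
  induction n with
  | zero => simp
  | succ n ih =>
    calc μ (ball x (2 ^ (n + 1) * r)) = μ (ball x (2 * (2 ^ n * r))) := by ring_nf
      _ ≤ C * μ (ball x (2 ^ n * r)) := hμ x _ (by positivity)
      _ ≤ C * (C ^ n * μ (ball x r)) := by gcongr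
      _ = C ^ (n + 1) * μ (ball x r) := by ring

theorem one_add_inv_pow_mul_measure_ball_le [OpensMeasurableSpace X] (hμ : IsDoubling μ C)
    {x y : X} {t : ℝ} (ht : 0 < t) (hxy : dist x y = 2 * t) :
    (1 + (C ^ 3)⁻¹) * μ (ball x t) ≤ μ (ball x (3 * t)) := by
  have hcover : ball x t ⊆ ball y (2 ^ 3 * (t / 2)) := fun z hz => by
    rw [mem_ball] at hz ⊢
    linarith [dist_triangle z x y]
  have hshare : μ (ball x t) / C ^ 3 ≤ μ (ball y (t / 2)) :=
    ENNReal.div_le_of_le_mul' <|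
      (measure_mono hcover).trans (hμ.measure_ball_two_pow_mul_le y (half_pos ht) 3)
  have hdisj : Disjoint (ball x t) (ball y (t / 2)) := disjoint_left.2 fun z hzx hzy => by
    rw [mem_ball] at hzx hzy
    linarith [dist_triangle_left x y z]
  have hsub : ball x t ∪ ball y (t / 2) ⊆ ball x (3 * t) := union_subset
    (ball_subset_ball (by linarith)) fun z hz => by
      rw [mem_ball] at hz ⊢
      linarith [dist_triangle z y x, dist_comm x y]
  calc (1 + (C ^ 3)⁻¹) * μ (ball x t) = μ (ball x t) + μ (ball x t) / C ^ 3 := by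
        rw [add_mul, one_mul, div_eq_mul_inv, mul_comm]
    _ ≤ μ (ball x t) + μ (ball y (t / 2)) := by gcongr
    _ = μ (ball x t ∪ ball y (t / 2)) := (measure_union hdisj measurableSet_ball).symm
    _ ≤ μ (ball x (3 * t)) := measure_mono hsub

end IsDoubling

theorem pow_mul_le_of_mul_le_apply_mul {f : ℝ → ℝ≥0∞} {δ : ℝ≥0∞} {a R : ℝ} (ha : 1 ≤ a)
    (hstep : ∀ t, 0 < t → a * t ≤ R → δ * f t ≤ f (a * t)) {r : ℝ} (hr : 0 < r) (n : ℕ)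
    (hn : a ^ n * r ≤ R) : δ ^ n * f r ≤ f (a ^ n * r) := by
  induction n with
  | zero => simp
  | succ n ih =>
    have hpos : 0 < a ^ n * r := by positivity
    have hmul : a * (a ^ n * r) = a ^ (n + 1) * r := by ring
    have hle : a ^ n * r ≤ R := le_trans (le_mul_of_one_le_left hpos.le ha) (hmul ▸ hn)
    calc δ ^ (n + 1) * f r = δ * (δ ^ n * f r) := by ring
      _ ≤ δ * f (a ^ n * r) := by gcongr; exact ih hle
      _ ≤ f (a ^ (n + 1) * r) := hmul ▸ hstep _ hpos (hmul ▸ hn)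

theorem ENNReal.toReal_div_toReal_le_inv_of_ofReal_mul_le {a b : ℝ≥0∞} {c : ℝ} (hc : 0 < c)
    (h : ENNReal.ofReal c * a ≤ b) : a.toReal / b.toReal ≤ c⁻¹ := by
  rcases eq_or_ne b ⊤ with rfl | hb
  · simp [hc.le]
  refine div_le_of_le_mul₀ ENNReal.toReal_nonneg (inv_nonneg.2 hc.le) ?_
  rw [inv_mul_eq_div, le_div_iff₀' hc]
  simpa [ENNReal.toReal_mul, hc.le] using ENNReal.toReal_mono hb h

theorem inv_pow_le_mul_inv_rpow_logb {a δ x : ℝ} {n : ℕ} (ha : 1 < a) (hδ : 1 ≤ δ)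
    (hx : 0 < x) (hxn : x < a ^ (n + 1)) : (δ ^ n)⁻¹ ≤ δ * x⁻¹ ^ Real.logb a δ := by
  have hα : 0 ≤ Real.logb a δ := Real.logb_nonneg ha hδ
  have hδpos : 0 < δ := by linarith
  have hpow : (a ^ (n + 1)) ^ Real.logb a δ = δ ^ (n + 1) := by
    rw [← Real.rpow_pow_comm (by linarith), Real.rpow_logb (by linarith) ha.ne' hδpos]
  calc (δ ^ n)⁻¹ = δ * (δ ^ (n + 1))⁻¹ := by field_simp; ring
    _ ≤ δ * (x ^ Real.logb a δ)⁻¹ := by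
        gcongr
        rw [← hpow]
        exact Real.rpow_le_rpow hx.le hxn.le hα
    _ = δ * x⁻¹ ^ Real.logb a δ := by rw [Real.inv_rpow hx.le]

theorem doubling_connected_implies_upper_volume_ratio_general
    {X : Type*} [MetricSpace X] [ConnectedSpace X] [MeasurableSpace X] [BorelSpace X]
    (μ : Measure X) (c_μ : ℝ) (hc : 1 ≤ c_μ)
    (hdbl : ∀ (x : X) (r : ℝ), 0 < r →
      μ (ball x (2 * r)) ≤ ENNReal.ofReal c_μ * μ (ball x r)) :
    ∃ c > (0:ℝ), ∃ α > (0:ℝ), ∀ (x₀ : X) (r R : ℝ), 0 < r → r < R →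
      ENNReal.ofReal (3 * R) < EMetric.diam (univ : Set X) →
      (μ (ball x₀ r)).toReal / (μ (ball x₀ R)).toReal ≤ c * (r / R) ^ α := by
  set δ : ℝ := 1 + (c_μ ^ 3)⁻¹
  have hδ : 1 < δ := lt_add_of_pos_right 1 (by positivity)
  have hδ_ofReal : ENNReal.ofReal δ = 1 + (ENNReal.ofReal c_μ ^ 3)⁻¹ := by
    rw [ENNReal.ofReal_add zero_le_one (by positivity), ENNReal.ofReal_one,
      ENNReal.ofReal_inv_of_pos (by positivity), ENNReal.ofReal_pow (by linarith)]
  refine ⟨δ, by linarith, Real.logb 3 δ, Real.logb_pos (by norm_num) hδ, ?_⟩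
  intro x₀ r R hr hrR hdiam
  obtain ⟨w, hw⟩ := exists_lt_dist_of_ofReal_lt_ediam x₀ hdiam
  have hstep : ∀ t, 0 < t → 3 * t ≤ R →
      ENNReal.ofReal δ * μ (ball x₀ t) ≤ μ (ball x₀ (3 * t)) := fun t ht htR => by
    obtain ⟨y, hy⟩ :=
      exists_dist_eq_of_le_dist (by linarith : 0 ≤ 2 * t) (by linarith : 2 * t ≤ dist x₀ w)
    rw [hδ_ofReal]
    exact IsDoubling.one_add_inv_pow_mul_measure_ball_le hdbl ht hy
  obtain ⟨n, hn, hn_lt⟩ := exists_nat_pow_near ((one_le_div hr).2 hrR.le) (by norm_num : (1:ℝ) < 3)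
  have hnR : 3 ^ n * r ≤ R := (le_div_iff₀ hr).1 hn
  calc (μ (ball x₀ r)).toReal / (μ (ball x₀ R)).toReal ≤ (δ ^ n)⁻¹ := by
        refine ENNReal.toReal_div_toReal_le_inv_of_ofReal_mul_le (by positivity) ?_
        rw [ENNReal.ofReal_pow (by linarith)]
        exact (pow_mul_le_of_mul_le_apply_mul (by norm_num) hstep hr n hnR).trans
          (measure_mono (ball_subset_ball hnR))
    _ ≤ δ * (r / R) ^ Real.logb 3 δ := by
        simpa only [inv_div] using
          inv_pow_le_mul_inv_rpow_logb (by norm_num) hδ.le (div_pos (hr.trans hrR) hr) hn_lt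

/-- If `X` is connected and `μ` is doubling, then there exist `c > 0` and
`α > 0` such that `μ(B(x₀,r))/μ(B(x₀,R)) ≤ c (r/R)^α` for `0 < r < R < diam X / 3`. -/
theorem doubling_connected_implies_upper_volume_ratio
    {X : Type*} [MetricSpace X] [ConnectedSpace X] [MeasurableSpace X] [BorelSpace X]
    (μ : Measure X) (c_μ : ℝ) (hc : 1 ≤ c_μ)
    (hnt : ∀ (x : X) (r : ℝ), 0 < r → 0 < μ (ball x r) ∧ μ (ball x r) < ⊤)
    (hdbl : ∀ (x : X) (r : ℝ), 0 < r →
      μ (ball x (2 * r)) ≤ ENNReal.ofReal c_μ * μ (ball x r)) :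
    ∃ c > (0:ℝ), ∃ α > (0:ℝ), ∀ (x₀ : X) (r R : ℝ), 0 < r → r < R →
      ENNReal.ofReal (3 * R) < EMetric.diam (univ : Set X) →
      (μ (ball x₀ r)).toReal / (μ (ball x₀ R)).toReal ≤ c * (r / R) ^ α :=
  doubling_connected_implies_upper_volume_ratio_general μ c_μ hc hdbl
end

section
/- Suppose \mu is doubling on a geodesic space X, 1 \leq p < \infty, 1 < q < \infty, and there exist constants c, \tau' \geq 1, \epsilon > 0 and \delta > 0 with (1+\epsilon)(1/2)^{1 - 1/q} < 1, such that (\fint_{B(x_0,r)} u^q\,d\mu)^{1/q} \leq c\,r\,(\fint_{B(x_0,\tau' r)} g_u^p\,d\mu)^{1/p} + (1+\epsilon)\fint_{B(x_0,r)} u\,d\mu holds for every nonnegative u \in N^{1,p}(B(x_0,\tau' r)) with 0 < r \leq \delta\,\mathrm{diam}(X). Then a (q,p)-Poincar\'e inequality holds in (X,d,\mu). -/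
/-!
Pick a median `a` of `u` on the ball `B`. The truncations of `(u - a)⁺` and `(u - a)⁻` are
admissible in the reverse Hölder inequality and vanish on half of `B`, so by Hölder their mean is
at most `(1/2)^(1 - 1/q)` times their `L^q`-mean, and the term `(1 + ε) ⨍ v` is absorbed into the
left-hand side. This gives the Poincaré inequality on all balls of radius at most `δ diam X`.
If `X` is bounded, a larger ball dilates to all of `X`, which is covered by a finite net of small
balls (finite by doubling); the averages over these balls are compared along chains of
overlapping balls on geodesics.
-/

open MeasureTheory Metric Set
open scoped ENNReal

/-- `X` is a geodesic space: any two points are joined by an isometric segment. -/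
def IsGeodesicSpace (X : Type*) [MetricSpace X] : Prop :=
  ∀ x y : X, ∃ γ : ℝ → X, γ 0 = x ∧ γ (dist x y) = y ∧
    ∀ s ∈ Set.Icc (0:ℝ) (dist x y), ∀ t ∈ Set.Icc (0:ℝ) (dist x y),
      dist (γ s) (γ t) = |s - t|

/-- `g` is an upper gradient of `u`: `g ≥ 0` and along every rectifiable curve
(parametrized by arclength, i.e. `1`-Lipschitz on `[0,ℓ]`) the fundamental
theorem type inequality holds. -/
def IsUpperGradient {X : Type*} [MetricSpace X] (u g : X → ℝ) : Prop :=
  (∀ x, 0 ≤ g x) ∧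
  ∀ (ℓ : ℝ) (γ : ℝ → X), 0 ≤ ℓ → LipschitzOnWith 1 γ (Set.Icc 0 ℓ) →
    |u (γ ℓ) - u (γ 0)| ≤ ∫ t in Set.Icc (0:ℝ) ℓ, g (γ t)

/-- `(⨍_s (f)^e dμ)^{1/e}` as an extended nonnegative real. -/
noncomputable def avgPow {X : Type*} [MeasurableSpace X]
    (μ : MeasureTheory.Measure X) (s : Set X) (f : X → ℝ) (e : ℝ) : ℝ≥0∞ :=
  ((∫⁻ x in s, ENNReal.ofReal (f x) ^ e ∂μ) / μ s) ^ (1 / e)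

/-- The `(q,p)`-Poincaré inequality on the ball `B(x₀,r)` with constants `c_P, τ`,
formulated for every function–upper-gradient pair. -/
def PoincareOn {X : Type*} [MetricSpace X] [MeasurableSpace X]
    (μ : MeasureTheory.Measure X) (p q c_P τ : ℝ) (x₀ : X) (r : ℝ) : Prop :=
  ∀ u g : X → ℝ, IsUpperGradient u g →
    MeasureTheory.IntegrableOn u (ball x₀ (τ * r)) μ →
    avgPow μ (ball x₀ r) (fun x => |u x - ⨍ y in ball x₀ r, u y ∂μ|) q ≤
      ENNReal.ofReal (c_P * r) * avgPow μ (ball x₀ (τ * r)) g p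

open scoped NNReal

theorem ENNReal.le_div_one_sub_of_le_add_mul {a b κ : ℝ≥0∞} (ha : a ≠ ⊤) (hκ : κ < 1)
    (h : a ≤ b + κ * a) : a ≤ b / (1 - κ) := by
  rw [ENNReal.le_div_iff_mul_le (Or.inl (tsub_pos_of_lt hκ).ne')
    (Or.inl (ENNReal.sub_ne_top ENNReal.one_ne_top)), ENNReal.mul_sub fun _ _ => ha,
    mul_one, mul_comm]
  exact tsub_le_iff_left.mpr (by rwa [add_comm])

section AvgPow

variable {X : Type*} [MeasurableSpace X] {μ : Measure X} {s t T : Set X} {e q : ℝ}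

theorem avgPow_le_iff {f : X → ℝ} (he : 0 < e) {M : ℝ≥0∞} :
    avgPow μ s f e ≤ M ↔ (∫⁻ x in s, ENNReal.ofReal (f x) ^ e ∂μ) / μ s ≤ M ^ e := by
  rw [avgPow, one_div, ENNReal.rpow_inv_le_iff he]

theorem setLIntegral_le_of_avgPow_le {f : X → ℝ} (he : 0 < e) {M : ℝ≥0∞}
    (hs : μ s ≠ ⊤) (h : avgPow μ s f e ≤ M) :
    ∫⁻ x in s, ENNReal.ofReal (f x) ^ e ∂μ ≤ M ^ e * μ s := by
  rcases eq_or_ne (μ s) 0 with hs0 | hs0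
  · simp [Measure.restrict_eq_zero.mpr hs0]
  exact (ENNReal.div_le_iff hs0 hs).mp ((avgPow_le_iff he).mp h)

theorem avgPow_le_ofReal_of_le {f : X → ℝ} (he : 0 < e) {C : ℝ} (hf : ∀ x, f x ≤ C) :
    avgPow μ s f e ≤ ENNReal.ofReal C := by
  rw [avgPow_le_iff he]
  calc (∫⁻ x in s, ENNReal.ofReal (f x) ^ e ∂μ) / μ s
      ≤ (∫⁻ _ in s, ENNReal.ofReal C ^ e ∂μ) / μ s := by
        gcongr with x
        exact hf x
    _ ≤ ENNReal.ofReal C ^ e := by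
        rw [setLIntegral_const]
        exact ENNReal.div_le_of_le_mul le_rfl

theorem avgPow_const (he : e ≠ 0) (hs0 : μ s ≠ 0) (hs : μ s ≠ ⊤) (C : ℝ) :
    avgPow μ s (fun _ => C) e = ENNReal.ofReal C := by
  rw [avgPow, setLIntegral_const, ENNReal.mul_div_cancel_right hs0 hs,
    ← ENNReal.rpow_mul, mul_one_div_cancel he, ENNReal.rpow_one]

theorem avgPow_add_le {f f₁ f₂ : X → ℝ} (he : 1 ≤ e)
    (hf₁ : AEMeasurable f₁ (μ.restrict s)) (hf₂ : AEMeasurable f₂ (μ.restrict s))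
    (h : ∀ x, ENNReal.ofReal (f x) ≤ ENNReal.ofReal (f₁ x) + ENNReal.ofReal (f₂ x)) :
    avgPow μ s f e ≤ avgPow μ s f₁ e + avgPow μ s f₂ e := by
  have he' : (0 : ℝ) ≤ 1 / e := by positivity
  simp only [avgPow, ENNReal.div_rpow_of_nonneg _ _ he', ← ENNReal.add_div]
  gcongr
  calc (∫⁻ x in s, ENNReal.ofReal (f x) ^ e ∂μ) ^ (1 / e)
      ≤ (∫⁻ x in s, (ENNReal.ofReal (f₁ x) + ENNReal.ofReal (f₂ x)) ^ e ∂μ) ^ (1 / e) := by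
        gcongr with x
        exact h x
    _ ≤ _ := ENNReal.lintegral_Lp_add_le hf₁.ennreal_ofReal hf₂.ennreal_ofReal he

theorem setLIntegral_div_le_mul_of_subset {h : X → ℝ≥0∞} (hst : s ⊆ t) (ht0 : μ t ≠ 0)
    (ht : μ t ≠ ⊤) {C : ℝ≥0∞} (hC : μ t ≤ C * μ s) :
    (∫⁻ x in s, h x ∂μ) / μ s ≤ C * ((∫⁻ x in t, h x ∂μ) / μ t) := by
  set I := ∫⁻ x in t, h x ∂μ
  calc (∫⁻ x in s, h x ∂μ) / μ s ≤ I / μ s := by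
        gcongr
        exact lintegral_mono_set hst
    _ ≤ C * (I / μ t) := by
        refine ENNReal.div_le_of_le_mul ?_
        calc I = I / μ t * μ t := (ENNReal.div_mul_cancel ht0 ht).symm
          _ ≤ I / μ t * (C * μ s) := by gcongr
          _ = C * (I / μ t) * μ s := by ring

theorem avgPow_le_rpow_mul_of_subset {f : X → ℝ} (he : 0 ≤ e) (hst : s ⊆ t)
    (ht0 : μ t ≠ 0) (ht : μ t ≠ ⊤) {C : ℝ≥0∞} (hC : μ t ≤ C * μ s) :
    avgPow μ s f e ≤ C ^ (1 / e) * avgPow μ t f e := by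
  rw [avgPow, avgPow, ← ENNReal.mul_rpow_of_nonneg _ _ (by positivity)]
  gcongr
  exact setLIntegral_div_le_mul_of_subset hst ht0 ht hC

theorem avgPow_le_of_forall_min_natCast_le {f : X → ℝ} (hf : AEMeasurable f (μ.restrict s))
    (he : 0 < e) {M : ℝ≥0∞} (h : ∀ k : ℕ, avgPow μ s (fun x => min (f x) k) e ≤ M) :
    avgPow μ s f e ≤ M := by
  simp only [avgPow_le_iff he] at h ⊢
  have hsup : ∀ x, ENNReal.ofReal (f x) ^ e = ⨆ k : ℕ, ENNReal.ofReal (min (f x) k) ^ e := by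
    refine fun x => le_antisymm ?_ (iSup_le fun k => by gcongr; exact min_le_left _ _)
    exact le_iSup_of_le ⌈f x⌉₊ (by rw [min_eq_left (Nat.le_ceil _)])
  rw [lintegral_congr hsup, lintegral_iSup'
    (fun k => ((hf.min aemeasurable_const).ennreal_ofReal).pow_const e)
    (ae_of_all _ fun x k₁ k₂ hk => by dsimp only; gcongr), ENNReal.iSup_div]
  exact iSup_le h

theorem setLIntegral_le_rpow_mul_measure_of_support_subset {h : X → ℝ≥0∞} (hq : 1 ≤ q)
    (hh : AEMeasurable h (μ.restrict s)) (hT : h.support ⊆ T) :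
    ∫⁻ x in s, h x ∂μ ≤ (∫⁻ x in s, h x ^ q ∂μ) ^ (1 / q) * μ.restrict s T ^ (1 - 1 / q) := by
  set ν := (μ.restrict s).restrict T
  have hν : ν ≤ μ.restrict s := Measure.restrict_le_self
  have key := eLpNorm'_le_eLpNorm'_mul_rpow_measure_univ one_pos hq
    (hh.mono_measure hν).aestronglyMeasurable
  simp only [eLpNorm'_eq_lintegral_enorm, enorm_eq_self, ENNReal.rpow_one, div_one,
    show ν univ = μ.restrict s T from Measure.restrict_apply_univ T] at key
  rw [← setLIntegral_eq_of_support_subset hT]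
  refine key.trans (mul_le_mul_left ?_ _)
  exact ENNReal.rpow_le_rpow (lintegral_mono' hν le_rfl) (by positivity)

theorem setLIntegral_div_le_rpow_mul_avgPow {f : X → ℝ} (hq : 1 ≤ q)
    (hf : AEMeasurable f (μ.restrict s)) (hT : (fun x => ENNReal.ofReal (f x)).support ⊆ T)
    (hs0 : μ s ≠ 0) (hs : μ s ≠ ⊤) {θ : ℝ≥0∞} (hθ : μ.restrict s T ≤ θ * μ s) :
    (∫⁻ x in s, ENNReal.ofReal (f x) ∂μ) / μ s ≤ θ ^ (1 - 1 / q) * avgPow μ s f q := by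
  have hq' : 0 ≤ 1 - 1 / q := by
    rw [sub_nonneg, div_le_one (by linarith)]; exact hq
  set I := ∫⁻ x in s, ENNReal.ofReal (f x) ^ q ∂μ
  refine ENNReal.div_le_of_le_mul ?_
  calc ∫⁻ x in s, ENNReal.ofReal (f x) ∂μ ≤ I ^ (1 / q) * μ.restrict s T ^ (1 - 1 / q) :=
        setLIntegral_le_rpow_mul_measure_of_support_subset hq hf.ennreal_ofReal hT
    _ ≤ I ^ (1 / q) * (θ * μ s) ^ (1 - 1 / q) := by gcongr
    _ = θ ^ (1 - 1 / q) * (I ^ (1 / q) / μ s ^ (1 / q) * μ s ^ (1 / q)) * μ s ^ (1 - 1 / q) := by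
        rw [ENNReal.div_mul_cancel (by simp [hs0, hs]) (by simp [hs0, hs]),
          ENNReal.mul_rpow_of_nonneg _ _ hq']
        ring
    _ = θ ^ (1 - 1 / q) * avgPow μ s f q * μ s := by
        rw [avgPow, ENNReal.div_rpow_of_nonneg _ _ (by positivity), mul_assoc, mul_assoc,
          mul_assoc, ← ENNReal.rpow_add _ _ hs0 hs, add_sub_cancel, ENNReal.rpow_one]

theorem edist_setAverage_le {u : X → ℝ} (hu : IntegrableOn u s μ) (hs0 : μ s ≠ 0)
    (hs : μ s ≠ ⊤) (a : ℝ) :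
    edist (⨍ x in s, u x ∂μ) a ≤ (∫⁻ x in s, ENNReal.ofReal |u x - a| ∂μ) / μ s := by
  set ν := (μ s)⁻¹ • μ.restrict s
  have : IsProbabilityMeasure ν := ProbabilityTheory.cond_isProbabilityMeasure_of_finite hs0 hs
  have hν : Integrable u ν := hu.smul_measure (ENNReal.inv_ne_top.mpr hs0)
  calc edist (⨍ x in s, u x ∂μ) a = ‖∫ x, (u x - a) ∂ν‖ₑ := by
        rw [integral_sub hν (integrable_const a), integral_const, probReal_univ, one_smul,
          setAverage_eq', edist_eq_enorm_sub]
    _ ≤ ∫⁻ x, ‖u x - a‖ₑ ∂ν := enorm_integral_le_lintegral_enorm _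
    _ = (∫⁻ x in s, ENNReal.ofReal |u x - a| ∂μ) / μ s := by
        simp [ν, lintegral_smul_measure, Real.enorm_eq_ofReal_abs, ENNReal.div_eq_inv_mul]

theorem edist_setAverage_le_avgPow {u : X → ℝ} (hu : IntegrableOn u s μ) (hs0 : μ s ≠ 0)
    (hs : μ s ≠ ⊤) (hq : 1 ≤ q) (a : ℝ) :
    edist (⨍ x in s, u x ∂μ) a ≤ avgPow μ s (fun x => |u x - a|) q := by
  refine (edist_setAverage_le hu hs0 hs a).trans ?_
  simpa using setLIntegral_div_le_rpow_mul_avgPow hq (hu.aemeasurable.sub_const a).abs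
    (subset_univ _) hs0 hs (θ := 1) (by simp)

theorem edist_setAverage_setAverage_le {u : X → ℝ} (hst : s ⊆ t) (hu : IntegrableOn u t μ)
    (hs0 : μ s ≠ 0) (ht : μ t ≠ ⊤) {C : ℝ≥0∞} (hC : μ t ≤ C * μ s) (hq : 1 ≤ q) :
    edist (⨍ x in s, u x ∂μ) (⨍ x in t, u x ∂μ) ≤
      C * avgPow μ t (fun x => |u x - ⨍ y in t, u y ∂μ|) q := by
  set b := ⨍ y in t, u y ∂μ
  have ht0 : μ t ≠ 0 := fun h => hs0 (measure_mono_null hst h)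
  calc edist (⨍ x in s, u x ∂μ) b ≤ (∫⁻ x in s, ENNReal.ofReal |u x - b| ∂μ) / μ s :=
        edist_setAverage_le (hu.mono_set hst) hs0 (measure_ne_top_of_subset hst ht) b
    _ ≤ C * ((∫⁻ x in t, ENNReal.ofReal |u x - b| ∂μ) / μ t) :=
        setLIntegral_div_le_mul_of_subset hst ht0 ht hC
    _ ≤ C * avgPow μ t (fun x => |u x - b|) q := by
        gcongr
        simpa using setLIntegral_div_le_rpow_mul_avgPow hq (hu.aemeasurable.sub_const b).abs
          (subset_univ _) ht0 ht (θ := 1) (by simp)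

theorem avgPow_abs_sub_le_add_edist {u : X → ℝ} (hu : AEMeasurable u (μ.restrict s))
    (hs0 : μ s ≠ 0) (hs : μ s ≠ ⊤) (hq : 1 ≤ q) (a b : ℝ) :
    avgPow μ s (fun x => |u x - a|) q ≤ avgPow μ s (fun x => |u x - b|) q + edist b a := by
  calc avgPow μ s (fun x => |u x - a|) q
      ≤ avgPow μ s (fun x => |u x - b|) q + avgPow μ s (fun _ => |b - a|) q := by
        refine avgPow_add_le hq (hu.sub_const b).abs aemeasurable_const fun x => ?_
        rw [← ENNReal.ofReal_add (abs_nonneg _) (abs_nonneg _)]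
        exact ENNReal.ofReal_le_ofReal (abs_sub_le _ _ _)
    _ = avgPow μ s (fun x => |u x - b|) q + edist b a := by
        rw [avgPow_const (by linarith) hs0 hs, edist_dist, Real.dist_eq]

theorem avgPow_abs_sub_setAverage_le_two_mul {u : X → ℝ} (hu : IntegrableOn u s μ)
    (hs0 : μ s ≠ 0) (hs : μ s ≠ ⊤) (hq : 1 ≤ q) (a : ℝ) :
    avgPow μ s (fun x => |u x - ⨍ y in s, u y ∂μ|) q ≤ 2 * avgPow μ s (fun x => |u x - a|) q := by
  calc avgPow μ s (fun x => |u x - ⨍ y in s, u y ∂μ|) q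
      ≤ avgPow μ s (fun x => |u x - a|) q + edist a (⨍ y in s, u y ∂μ) :=
        avgPow_abs_sub_le_add_edist hu.aemeasurable hs0 hs hq _ a
    _ ≤ avgPow μ s (fun x => |u x - a|) q + avgPow μ s (fun x => |u x - a|) q := by
        rw [edist_comm]
        gcongr
        exact edist_setAverage_le_avgPow hu hs0 hs hq a
    _ = 2 * avgPow μ s (fun x => |u x - a|) q := (two_mul _).symm

theorem avgPow_univ_le_of_cover {ι : Type*} (N : Finset ι) {t : ι → Set X}
    (hcover : (univ : Set X) ⊆ ⋃ i ∈ N, t i) (ht : ∀ i ∈ N, μ (t i) ≠ ⊤) {f : X → ℝ}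
    (hq : 0 < q) {M : ℝ≥0∞} (hM : ∀ i ∈ N, avgPow μ (t i) f q ≤ M) :
    avgPow μ univ f q ≤ (N.card : ℝ≥0∞) ^ (1 / q) * M := by
  rw [avgPow_le_iff hq, ENNReal.mul_rpow_of_nonneg _ _ hq.le, ← ENNReal.rpow_mul,
    one_div_mul_cancel hq.ne', ENNReal.rpow_one]
  refine ENNReal.div_le_of_le_mul ?_
  have hunion : (univ : Set X) = ⋃ i : N, t i := by
    refine (eq_univ_of_univ_subset hcover).symm.trans ?_
    simp [iUnion_subtype]
  calc ∫⁻ x in univ, ENNReal.ofReal (f x) ^ q ∂μ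
      ≤ ∑' i : N, ∫⁻ x in t i, ENNReal.ofReal (f x) ^ q ∂μ := by
        rw [hunion]; exact lintegral_iUnion_le _ _
    _ ≤ ∑' _ : N, M ^ q * μ univ := ENNReal.tsum_le_tsum fun i =>
        (setLIntegral_le_of_avgPow_le hq (ht i i.2) (hM i i.2)).trans
          (by gcongr; exact subset_univ _)
    _ = N.card * M ^ q * μ univ := by simp [mul_assoc]

theorem avgPow_le_div_of_le_add_setAverage {v : X → ℝ} {η : ℝ} {A : ℝ≥0∞} (hq : 1 < q)
    (hη : η * (1 / 2) ^ (1 - 1 / q) < 1) (hs0 : μ s ≠ 0) (hs : μ s ≠ ⊤) (hv0 : ∀ x, 0 ≤ v x)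
    (hv : IntegrableOn v s μ) (hvT : v.support ⊆ T) (hT : μ.restrict s T ≤ μ s / 2)
    (hfin : avgPow μ s v q ≠ ⊤)
    (hRH : avgPow μ s v q ≤ A + ENNReal.ofReal (η * ⨍ x in s, v x ∂μ)) :
    avgPow μ s v q ≤ A / (1 - ENNReal.ofReal (η * (1 / 2) ^ (1 - 1 / q))) := by
  refine ENNReal.le_div_one_sub_of_le_add_mul hfin (ENNReal.ofReal_lt_one.mpr hη) (hRH.trans ?_)
  gcongr
  have hm : 0 ≤ ⨍ x in s, v x ∂μ := by
    rw [setAverage_eq']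
    exact integral_nonneg hv0
  rw [ENNReal.ofReal_mul' hm, ofReal_setAverage hv (ae_of_all _ hv0),
    ENNReal.ofReal_mul' (by positivity), mul_assoc]
  gcongr
  rw [← ENNReal.ofReal_rpow_of_pos (by norm_num), one_div, ENNReal.ofReal_inv_of_pos two_pos,
    ENNReal.ofReal_ofNat]
  exact setLIntegral_div_le_rpow_mul_avgPow hq.le hv.aemeasurable
    ((Function.support_comp_subset ENNReal.ofReal_zero v).trans hvT) hs0 hs
    (by rwa [ENNReal.div_eq_inv_mul] at hT)

end AvgPow

theorem measure_setOf_lt_le_of_forall_lt {α : Type*} [MeasurableSpace α] {ν : Measure α}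
    {f : α → ℝ} {a : ℝ} {c : ℝ≥0∞} (h : ∀ t < a, ν {x | f x ≤ t} ≤ c) :
    ν {x | f x < a} ≤ c := by
  rw [show {x | f x < a} = ⋃ n : ℕ, {x | f x ≤ a - 1 / (n + 1)} by
    ext x
    simp only [mem_ofPred_eq, mem_iUnion]
    refine ⟨fun hx => ?_, fun ⟨n, hn⟩ => hn.trans_lt (sub_lt_self a (by positivity))⟩
    obtain ⟨n, hn⟩ := exists_nat_one_div_lt (sub_pos.mpr hx)
    exact ⟨n, by linarith⟩]
  rw [Monotone.measure_iUnion (s := fun n : ℕ => {x | f x ≤ a - 1 / (n + 1)})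
    fun m n hmn x (hx : f x ≤ a - 1 / (m + 1)) => show f x ≤ a - 1 / (n + 1) from
      le_trans hx (by gcongr)]
  exact iSup_le fun n => h _ (sub_lt_self a (by positivity))

open Filter Topology in
theorem le_measure_setOf_le_of_forall_gt {α : Type*} [MeasurableSpace α] {ν : Measure α}
    [IsFiniteMeasure ν] {f : α → ℝ} (hf : AEMeasurable f ν) {a : ℝ} {c : ℝ≥0∞}
    (h : ∀ t > a, c ≤ ν {x | f x ≤ t}) : c ≤ ν {x | f x ≤ a} := by
  have hlim := tendsto_measure_biInter_gt (μ := ν) (s := fun t => {x | f x ≤ t}) (a := a)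
    (fun r _ => nullMeasurableSet_le hf aemeasurable_const)
    (fun _ _ _ hij _ hx => le_trans hx hij) ⟨a + 1, by linarith, measure_ne_top ν _⟩
  rw [show ⋂ r > a, {x | f x ≤ r} = {x | f x ≤ a} by
    ext x
    simp only [mem_iInter, mem_ofPred_eq]
    exact ⟨le_of_forall_gt_imp_ge_of_dense, fun h r hr => h.trans hr.le⟩] at hlim
  exact ge_of_tendsto hlim (eventually_nhdsWithin_of_forall h)

open Filter Topology in
theorem exists_median {α : Type*} [MeasurableSpace α] (ν : Measure α) [IsFiniteMeasure ν]
    {f : α → ℝ} (hf : AEMeasurable f ν) :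
    ∃ a : ℝ, ν {x | a < f x} ≤ ν univ / 2 ∧ ν {x | f x < a} ≤ ν univ / 2 := by
  rcases eq_or_ne (ν univ) 0 with h0 | h0
  · exact ⟨0, by simp [Measure.measure_univ_eq_zero.mp h0]⟩
  have hmono : Monotone fun t : ℝ => {x | f x ≤ t} := fun _ _ h _ hx => le_trans hx h
  have htop : Tendsto (fun t => ν {x | f x ≤ t}) atTop (𝓝 (ν univ)) := by
    have := tendsto_measure_iUnion_atTop (μ := ν) hmono
    rwa [iUnion_eq_univ_iff.mpr fun x => ⟨f x, le_refl (f x)⟩] at this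
  have hbot : Tendsto (fun t => ν {x | f x ≤ t}) atBot (𝓝 0) := by
    have := tendsto_measure_iInter_atBot (fun t => nullMeasurableSet_le hf aemeasurable_const)
      hmono ⟨0, measure_ne_top ν _⟩
    rwa [iInter_eq_empty_iff.mpr fun x => ⟨f x - 1, by simp⟩, measure_empty] at this
  set S := {t | ν univ / 2 ≤ ν {x | f x ≤ t}}
  obtain ⟨t₁, ht₁⟩ := (htop.eventually (lt_mem_nhds (ENNReal.half_lt_self h0
    (measure_ne_top ν _)))).exists
  obtain ⟨t₀, ht₀⟩ := eventually_atBot.mp (hbot.eventually (gt_mem_nhds (ENNReal.half_pos h0)))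
  have hS : S.Nonempty := ⟨t₁, ht₁.le⟩
  have hS_bdd : BddBelow S := ⟨t₀, fun t ht => le_of_not_gt fun h => (ht₀ t h.le).not_ge ht⟩
  have hmem : sInf S ∈ S := le_measure_setOf_le_of_forall_gt hf fun t ht => by
    obtain ⟨t', ht'S, ht't⟩ := exists_lt_of_csInf_lt hS ht
    exact ht'S.trans (measure_mono (hmono ht't.le))
  refine ⟨sInf S, ?_, measure_setOf_lt_le_of_forall_lt fun t ht =>
    (not_le.mp (show t ∉ S from notMem_of_lt_csInf ht hS_bdd)).le⟩
  rw [show {x | sInf S < f x} = {x | f x ≤ sInf S}ᶜ by ext; simp,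
    measure_compl₀ (nullMeasurableSet_le hf aemeasurable_const) (measure_ne_top ν _)]
  exact (tsub_le_tsub_left hmem _).trans_eq (ENNReal.sub_half (measure_ne_top ν univ))

theorem IsUpperGradient.comp_lipschitzWith {X : Type*} [MetricSpace X] {u g : X → ℝ}
    (h : IsUpperGradient u g) {φ : ℝ → ℝ} (hφ : LipschitzWith 1 φ) :
    IsUpperGradient (fun x => φ (u x)) g := by
  refine ⟨h.1, fun ℓ γ hℓ hγ => le_trans ?_ (h.2 ℓ γ hℓ hγ)⟩
  simpa [Real.dist_eq] using hφ.dist_le_mul (u (γ ℓ)) (u (γ 0))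

section ReverseHolder

variable {X : Type*} [MetricSpace X] [MeasurableSpace X] {μ : Measure X} {s t T : Set X}
  {q η : ℝ} {A : ℝ≥0∞} {g : X → ℝ}

/-- Applied with `s = B`, `t = τ' B`, `A = c r (⨍_{τ' B} g ^ p) ^ (1 / p)` and `η = 1 + ε`. -/
def ReverseHolderOn (μ : Measure X) (s t : Set X) (g : X → ℝ) (q η : ℝ) (A : ℝ≥0∞) : Prop :=
  ∀ v : X → ℝ, IsUpperGradient v g → (∀ x, 0 ≤ v x) → IntegrableOn v t μ →
    avgPow μ s v q ≤ A + ENNReal.ofReal (η * ⨍ x in s, v x ∂μ)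

theorem ReverseHolderOn.avgPow_comp_le (hRH : ReverseHolderOn μ s t g q η A) (hst : s ⊆ t)
    (hs0 : μ s ≠ 0) (ht : μ t ≠ ⊤) (hq : 1 < q) (hη : η * (1 / 2) ^ (1 - 1 / q) < 1)
    {u : X → ℝ} (hug : IsUpperGradient u g) (hu : AEMeasurable u (μ.restrict t))
    {φ : ℝ → ℝ} (hφ : LipschitzWith 1 φ) (hφ0 : ∀ y, 0 ≤ φ y)
    (hT : (fun x => φ (u x)).support ⊆ T) (hTs : μ.restrict s T ≤ μ s / 2) :
    avgPow μ s (fun x => φ (u x)) q ≤ A / (1 - ENNReal.ofReal (η * (1 / 2) ^ (1 - 1 / q))) := by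
  have hφu : AEMeasurable (fun x => φ (u x)) (μ.restrict t) :=
    hφ.continuous.measurable.comp_aemeasurable hu
  -- The truncations `min (φ ∘ u) k` have finite `avgPow`, so the absorption applies to them.
  refine avgPow_le_of_forall_min_natCast_le (hφu.mono_measure (Measure.restrict_mono hst le_rfl))
    (by linarith) fun k => ?_
  have hv0 : ∀ x, 0 ≤ min (φ (u x)) k := fun x => le_min (hφ0 _) k.cast_nonneg
  have hv : IntegrableOn (fun x => min (φ (u x)) k) t μ :=
    (integrableOn_const ht : IntegrableOn (fun _ => (k : ℝ)) t μ).mono'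
      (hφu.min aemeasurable_const).aestronglyMeasurable (ae_of_all _ fun x => by
        rw [Real.norm_of_nonneg (hv0 x)]; exact min_le_right (φ (u x)) (k : ℝ))
  refine avgPow_le_div_of_le_add_setAverage hq hη hs0 (measure_ne_top_of_subset hst ht) hv0
    (hv.mono_set hst) ?_ hTs (ne_top_of_le_ne_top ENNReal.ofReal_ne_top
      (avgPow_le_ofReal_of_le (by linarith) fun x => min_le_right _ _))
    (hRH _ (hug.comp_lipschitzWith (hφ.min_const k)) hv0 hv)
  refine fun x hx => hT fun h => hx ?_
  simp only [h, min_eq_left k.cast_nonneg]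

theorem ReverseHolderOn.avgPow_abs_sub_setAverage_le (hRH : ReverseHolderOn μ s t g q η A)
    (hst : s ⊆ t) (hs0 : μ s ≠ 0) (ht : μ t ≠ ⊤) (hq : 1 < q)
    (hη : η * (1 / 2) ^ (1 - 1 / q) < 1) {u : X → ℝ} (hug : IsUpperGradient u g)
    (hu : IntegrableOn u t μ) :
    avgPow μ s (fun x => |u x - ⨍ y in s, u y ∂μ|) q ≤
      4 * A / (1 - ENNReal.ofReal (η * (1 / 2) ^ (1 - 1 / q))) := by
  have hs : μ s ≠ ⊤ := measure_ne_top_of_subset hst ht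
  have : IsFiniteMeasure (μ.restrict s) := isFiniteMeasure_restrict.mpr hs
  obtain ⟨a, ha₁, ha₂⟩ := exists_median (μ.restrict s) (hu.mono_set hst).aemeasurable
  rw [Measure.restrict_apply_univ] at ha₁ ha₂
  have hplus := hRH.avgPow_comp_le hst hs0 ht hq hη hug hu.aemeasurable
    (by simpa using (LipschitzWith.id.sub (LipschitzWith.const a)).max_const 0)
    (fun y => le_max_right (y - a) 0) (T := {x | a < u x})
    (fun x hx => by simp only [Function.mem_support, ne_eq, max_eq_right_iff, not_le,
      sub_pos] at hx; exact hx) ha₁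
  have hminus := hRH.avgPow_comp_le hst hs0 ht hq hη hug hu.aemeasurable
    (by simpa using ((LipschitzWith.const a).sub LipschitzWith.id).max_const 0)
    (fun y => le_max_right (a - y) 0) (T := {x | u x < a})
    (fun x hx => by simp only [Function.mem_support, ne_eq, max_eq_right_iff, not_le,
      sub_pos] at hx; exact hx) ha₂
  have hum := (hu.mono_set hst).aemeasurable
  calc avgPow μ s (fun x => |u x - ⨍ y in s, u y ∂μ|) q
      ≤ 2 * avgPow μ s (fun x => |u x - a|) q :=
        avgPow_abs_sub_setAverage_le_two_mul (hu.mono_set hst) hs0 hs hq.le a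
    _ ≤ 2 * (avgPow μ s (fun x => max (u x - a) 0) q +
          avgPow μ s (fun x => max (a - u x) 0) q) := by
        gcongr
        refine avgPow_add_le hq.le ((hum.sub_const a).max aemeasurable_const)
          ((aemeasurable_const.sub hum).max aemeasurable_const) fun x => ?_
        rw [← ENNReal.ofReal_add (le_max_right _ _) (le_max_right _ _)]
        rcases le_total (u x) a with h | h
        · simp [abs_of_nonpos (sub_nonpos.mpr h), h]
        · simp [abs_of_nonneg (sub_nonneg.mpr h), h]
    _ ≤ 2 * (A / (1 - ENNReal.ofReal (η * (1 / 2) ^ (1 - 1 / q))) +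
          A / (1 - ENNReal.ofReal (η * (1 / 2) ^ (1 - 1 / q)))) := by gcongr
    _ = 4 * A / (1 - ENNReal.ofReal (η * (1 / 2) ^ (1 - 1 / q))) := by
        rw [mul_div_assoc]; ring

theorem poincareOn_of_forall_reverseHolderOn {x₀ : X} {r τ' c p : ℝ} (hr : 0 < r)
    (hτ' : 1 ≤ τ') (h0 : μ (ball x₀ r) ≠ 0) (hfin : μ (ball x₀ (τ' * r)) ≠ ⊤) (hq : 1 < q)
    (hη : η * (1 / 2) ^ (1 - 1 / q) < 1)
    (hRH : ∀ g, ReverseHolderOn μ (ball x₀ r) (ball x₀ (τ' * r)) g q η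
      (ENNReal.ofReal (c * r) * avgPow μ (ball x₀ (τ' * r)) g p)) :
    PoincareOn μ p q
      (4 * ENNReal.ofReal c / (1 - ENNReal.ofReal (η * (1 / 2) ^ (1 - 1 / q)))).toReal τ' x₀ r := by
  intro u g hug hu
  have hC : 4 * ENNReal.ofReal c / (1 - ENNReal.ofReal (η * (1 / 2) ^ (1 - 1 / q))) ≠ ⊤ :=
    ENNReal.div_ne_top (by finiteness) (tsub_pos_of_lt (ENNReal.ofReal_lt_one.mpr hη)).ne'
  refine ((hRH g).avgPow_abs_sub_setAverage_le (ball_subset_ball (by nlinarith)) h0 hfin hq hη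
    hug hu).trans_eq ?_
  rw [ENNReal.ofReal_mul ENNReal.toReal_nonneg, ENNReal.ofReal_toReal hC,
    ENNReal.ofReal_mul' hr.le, ENNReal.div_eq_inv_mul, ENNReal.div_eq_inv_mul]
  ring

end ReverseHolder

theorem IsGeodesicSpace.edist_le_natCeil_mul {X : Type*} [MetricSpace X] (hX : IsGeodesicSpace X)
    {E : Type*} [PseudoEMetricSpace E] {F : X → E} {s : ℝ} (hs : 0 < s) {C : ℝ≥0∞}
    (hF : ∀ w w' : X, dist w w' ≤ s → edist (F w) (F w') ≤ C) (y z : X) :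
    edist (F y) (F z) ≤ ⌈dist y z / s⌉₊ * C := by
  obtain ⟨γ, hγ0, hγL, hγ⟩ := hX y z
  set L := dist y z
  set n := ⌈L / s⌉₊
  set w : ℕ → X := fun i => γ (min (i * s) L)
  have hmem : ∀ i : ℕ, min (i * s) L ∈ Icc 0 L := fun i =>
    ⟨le_min (by positivity) dist_nonneg, min_le_right _ _⟩
  have hw0 : w 0 = y := by
    rw [← hγ0]; simp only [w, Nat.cast_zero, zero_mul]; exact congrArg γ (min_eq_left dist_nonneg)
  have hwn : w n = z := by
    rw [← hγL]; exact congrArg γ (min_eq_right ((div_le_iff₀ hs).mp (Nat.le_ceil (L / s))))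
  have hstep : ∀ i, dist (w i) (w (i + 1)) ≤ s := fun i => by
    simp only [w, hγ _ (hmem i) _ (hmem (i + 1))]
    refine (abs_min_sub_min_le_max _ _ _ _).trans ?_
    simp [add_mul, abs_of_pos hs, hs.le]
  calc edist (F y) (F z) = edist (F (w 0)) (F (w n)) := by rw [hw0, hwn]
    _ ≤ ∑ i ∈ Finset.range n, edist (F (w i)) (F (w (i + 1))) :=
      edist_le_range_sum_edist (fun i => F (w i)) n
    _ ≤ ∑ _i ∈ Finset.range n, C := Finset.sum_le_sum fun i _ => hF _ _ (hstep i)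
    _ = n * C := by simp

section MetricMeasure

variable {X : Type*} [MetricSpace X] [MeasurableSpace X] {μ : Measure X} {C : ℝ≥0∞}
  {p q τ' δ c₀ : ℝ}

theorem measure_ball_two_pow_mul_le
    (hdbl : ∀ (x : X) (r : ℝ), 0 < r → μ (ball x (2 * r)) ≤ C * μ (ball x r))
    (n : ℕ) (x : X) {r : ℝ} (hr : 0 < r) : μ (ball x (2 ^ n * r)) ≤ C ^ n * μ (ball x r) := by
  induction n with
  | zero => simp
  | succ n ih =>
    calc μ (ball x (2 ^ (n + 1) * r)) = μ (ball x (2 * (2 ^ n * r))) := by ring_nf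
      _ ≤ C * μ (ball x (2 ^ n * r)) := hdbl x _ (by positivity)
      _ ≤ C * (C ^ n * μ (ball x r)) := by gcongr
      _ = C ^ (n + 1) * μ (ball x r) := by ring

theorem exists_measure_ball_mul_le (hC : C ≠ ⊤)
    (hdbl : ∀ (x : X) (r : ℝ), 0 < r → μ (ball x (2 * r)) ≤ C * μ (ball x r)) (l : ℝ) :
    ∃ K ≠ ⊤, ∀ (x : X) (r : ℝ), 0 < r → μ (ball x (l * r)) ≤ K * μ (ball x r) := by
  obtain ⟨n, hn⟩ := pow_unbounded_of_one_lt l one_lt_two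
  refine ⟨C ^ n, ENNReal.pow_ne_top hC, fun x r hr => ?_⟩
  calc μ (ball x (l * r)) ≤ μ (ball x (2 ^ n * r)) := by gcongr
    _ ≤ C ^ n * μ (ball x r) := measure_ball_two_pow_mul_le hdbl n x hr

theorem exists_measure_univ_le_mul_measure_ball (hC : C ≠ ⊤)
    (hdbl : ∀ (x : X) (r : ℝ), 0 < r → μ (ball x (2 * r)) ≤ C * μ (ball x r))
    (hX : Bornology.IsBounded (univ : Set X)) {ρ : ℝ} (hρ : 0 < ρ) :
    ∃ K ≠ ⊤, ∀ (z : X) (R : ℝ), ρ ≤ R → μ univ ≤ K * μ (ball z R) := by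
  obtain ⟨K, hK, hball⟩ := exists_measure_ball_mul_le hC hdbl ((diam (univ : Set X) + 1) / ρ)
  refine ⟨K, hK, fun z R hR => ?_⟩
  have huniv : (univ : Set X) ⊆ ball z ((diam (univ : Set X) + 1) / ρ * ρ) := by
    rw [div_mul_cancel₀ _ hρ.ne']
    exact fun y _ => mem_ball.mpr ((dist_le_diam_of_mem hX (mem_univ y) (mem_univ z)).trans_lt
      (lt_add_one _))
  calc μ univ ≤ K * μ (ball z ρ) := (measure_mono huniv).trans (hball z ρ hρ)
    _ ≤ K * μ (ball z R) := by gcongr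

open Function in
theorem packingNumber_univ_ne_top_of_le_measure_ball [OpensMeasurableSpace X] (hμ : μ univ ≠ ⊤)
    {ε : ℝ≥0} {m : ℝ≥0∞} (hm : m ≠ 0) (hball : ∀ x : X, m ≤ μ (ball x (ε / 2))) :
    Metric.packingNumber ε (univ : Set X) ≠ ⊤ := by
  have hcard : ∀ C : Set X, Metric.IsSeparated ε C → (C.encard : ℝ≥0∞) * m ≤ μ univ := by
    intro C hC
    have hdisj : Pairwise (Disjoint on fun x : C => ball (x : X) (ε / 2)) := by
      refine fun x y hxy => ball_disjoint_ball ?_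
      have : (ε : ℝ≥0∞) < edist (x : X) y := hC x.2 y.2 (Subtype.coe_ne_coe.mpr hxy)
      rw [edist_nndist, ENNReal.coe_lt_coe, ← NNReal.coe_lt_coe, coe_nndist] at this
      linarith
    calc (C.encard : ℝ≥0∞) * m = ∑' _ : C, m := (ENNReal.tsum_set_const C m).symm
      _ ≤ ∑' x : C, μ (ball (x : X) (ε / 2)) := ENNReal.tsum_le_tsum fun x => hball x
      _ ≤ μ (⋃ x : C, ball (x : X) (ε / 2)) :=
        tsum_meas_le_meas_iUnion_of_disjoint μ (fun _ => measurableSet_ball) hdisj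
      _ ≤ μ univ := measure_mono (subset_univ _)
  have hle : (Metric.packingNumber ε (univ : Set X) : ℝ≥0∞) ≤ μ univ / m := by
    simp only [Metric.packingNumber, ENat.toENNReal_iSup]
    exact iSup₂_le fun C _ => iSup_le fun hC =>
      ENNReal.le_div_iff_mul_le (Or.inl hm) (Or.inr hμ) |>.mpr (hcard C hC)
  intro h
  rw [h, ENat.toENNReal_top, top_le_iff] at hle
  exact ENNReal.div_lt_top hμ hm |>.ne hle

theorem exists_finset_univ_subset_iUnion_ball [OpensMeasurableSpace X] (hμ : μ univ ≠ ⊤)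
    {s : ℝ} (hs : 0 < s) {m : ℝ≥0∞} (hm : m ≠ 0) (hball : ∀ x : X, m ≤ μ (ball x (s / 4))) :
    ∃ N : Finset X, (univ : Set X) ⊆ ⋃ z ∈ N, ball z s := by
  set ε : ℝ≥0 := ⟨s / 2, by positivity⟩
  have hpack : Metric.packingNumber ε (univ : Set X) ≠ ⊤ :=
    packingNumber_univ_ne_top_of_le_measure_ball hμ hm fun x => by
      convert hball x using 3; show s / 2 / 2 = s / 4; ring
  have hfin : (Metric.maximalSeparatedSet ε (univ : Set X)).Finite := by
    rw [← Set.encard_ne_top_iff, Metric.encard_maximalSeparatedSet hpack]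
    exact hpack
  refine ⟨hfin.toFinset, fun x _ => ?_⟩
  obtain ⟨y, hy, hxy⟩ := Metric.isCover_maximalSeparatedSet hpack (mem_univ x)
  have : dist x y ≤ s / 2 := by
    replace hxy : edist x y ≤ ε := hxy
    rw [edist_nndist, ENNReal.coe_le_coe, ← NNReal.coe_le_coe, coe_nndist] at hxy
    exact hxy
  exact mem_biUnion (hfin.mem_toFinset.mpr hy) (mem_ball.mpr (by linarith))

theorem IsGeodesicSpace.edist_setAverage_ball_le (hX : IsGeodesicSpace X)
    (hbdd : Bornology.IsBounded (univ : Set X))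
    (hnt : ∀ (x : X) (r : ℝ), 0 < r → 0 < μ (ball x r) ∧ μ (ball x r) < ⊤)
    {s : ℝ} (hs : 0 < s) {K : ℝ≥0∞} (hK : ∀ z, μ univ ≤ K * μ (ball z s)) (hq : 1 ≤ q)
    {u : X → ℝ} (hu : Integrable u μ) {Λ : ℝ≥0∞}
    (hΛ : ∀ w, avgPow μ (ball w (2 * s)) (fun x => |u x - ⨍ y in ball w (2 * s), u y ∂μ|) q ≤ Λ)
    (y z : X) :
    edist (⨍ x in ball y s, u x ∂μ) (⨍ x in ball z s, u x ∂μ) ≤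
      ⌈diam (univ : Set X) / s⌉₊ * (2 * K * Λ) := by
  have hnear : ∀ v w, dist v w ≤ s →
      edist (⨍ x in ball v s, u x ∂μ) (⨍ x in ball w (2 * s), u x ∂μ) ≤ K * Λ := fun v w h =>
    (edist_setAverage_setAverage_le (ball_subset_ball' (by linarith)) hu.integrableOn
      (hnt v s hs).1.ne' (hnt w _ (by linarith)).2.ne
      ((measure_mono (subset_univ _)).trans (hK v)) hq).trans (by gcongr; exact hΛ w)
  have hstep : ∀ w w' : X, dist w w' ≤ s →
      edist (⨍ x in ball w s, u x ∂μ) (⨍ x in ball w' s, u x ∂μ) ≤ 2 * K * Λ := fun w w' h =>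
    calc _ ≤ edist (⨍ x in ball w s, u x ∂μ) (⨍ x in ball w (2 * s), u x ∂μ) +
          edist (⨍ x in ball w' s, u x ∂μ) (⨍ x in ball w (2 * s), u x ∂μ) :=
          edist_triangle_right _ _ _
      _ ≤ K * Λ + K * Λ := add_le_add (hnear w w (by simpa using hs.le))
          (hnear w' w (by rwa [dist_comm]))
      _ = 2 * K * Λ := by ring
  refine (hX.edist_le_natCeil_mul hs hstep y z).trans ?_
  gcongr
  exact dist_le_diam_of_mem hbdd (mem_univ _) (mem_univ _)

theorem IsGeodesicSpace.avgPow_abs_sub_setAverage_ball_le (hX : IsGeodesicSpace X)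
    (hbdd : Bornology.IsBounded (univ : Set X))
    (hnt : ∀ (x : X) (r : ℝ), 0 < r → 0 < μ (ball x r) ∧ μ (ball x r) < ⊤)
    {s : ℝ} (hs : 0 < s) {K : ℝ≥0∞} (hK : ∀ z, μ univ ≤ K * μ (ball z s)) (hq : 1 ≤ q)
    {u : X → ℝ} (hu : Integrable u μ) {Λ : ℝ≥0∞}
    (hΛ : ∀ (w : X) (t : ℝ), s ≤ t → t ≤ 2 * s →
      avgPow μ (ball w t) (fun x => |u x - ⨍ y in ball w t, u y ∂μ|) q ≤ Λ) (z x₀ : X) :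
    avgPow μ (ball z s) (fun x => |u x - ⨍ y in ball x₀ s, u y ∂μ|) q ≤
      (1 + ⌈diam (univ : Set X) / s⌉₊ * (2 * K)) * Λ := calc
  _ ≤ avgPow μ (ball z s) (fun x => |u x - ⨍ y in ball z s, u y ∂μ|) q +
      edist (⨍ y in ball z s, u y ∂μ) (⨍ y in ball x₀ s, u y ∂μ) :=
    avgPow_abs_sub_le_add_edist hu.aemeasurable.restrict (hnt z s hs).1.ne' (hnt z s hs).2.ne
      hq _ _
  _ ≤ Λ + ⌈diam (univ : Set X) / s⌉₊ * (2 * K * Λ) := add_le_add (hΛ z s le_rfl (by linarith))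
      (hX.edist_setAverage_ball_le hbdd hnt hs hK hq hu
        (fun w => hΛ w (2 * s) (by linarith) le_rfl) z x₀)
  _ = (1 + ⌈diam (univ : Set X) / s⌉₊ * (2 * K)) * Λ := by ring

theorem IsGeodesicSpace.exists_avgPow_abs_sub_setAverage_le [OpensMeasurableSpace X]
    (hX : IsGeodesicSpace X) (hbdd : Bornology.IsBounded (univ : Set X))
    (hnt : ∀ (x : X) (r : ℝ), 0 < r → 0 < μ (ball x r) ∧ μ (ball x r) < ⊤) (hC : C ≠ ⊤)
    (hdbl : ∀ (x : X) (r : ℝ), 0 < r → μ (ball x (2 * r)) ≤ C * μ (ball x r))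
    (hq : 1 ≤ q) {s : ℝ} (hs : 0 < s) :
    ∃ Ξ ≠ ⊤, ∀ u : X → ℝ, Integrable u μ → ∀ Λ : ℝ≥0∞,
      (∀ (w : X) (t : ℝ), s ≤ t → t ≤ 2 * s →
        avgPow μ (ball w t) (fun x => |u x - ⨍ y in ball w t, u y ∂μ|) q ≤ Λ) →
      ∀ (x₀ : X) (r : ℝ), s ≤ r →
        avgPow μ (ball x₀ r) (fun x => |u x - ⨍ y in ball x₀ r, u y ∂μ|) q ≤ Ξ * Λ := by
  rcases isEmpty_or_nonempty X with hX₀ | ⟨⟨x₁⟩⟩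
  · exact ⟨0, ENNReal.zero_ne_top, fun _ _ _ _ x₀ => isEmptyElim x₀⟩
  obtain ⟨K, hK, hKball⟩ := exists_measure_univ_le_mul_measure_ball hC hdbl hbdd
    (ρ := s / 4) (by positivity)
  have hμ : μ univ ≠ ⊤ :=
    ne_top_of_le_ne_top (ENNReal.mul_ne_top hK (hnt x₁ s hs).2.ne) (hKball x₁ s (by linarith))
  have hμ0 : μ univ ≠ 0 := ((hnt x₁ s hs).1.trans_le (measure_mono (subset_univ _))).ne'
  obtain ⟨N, hN⟩ := exists_finset_univ_subset_iUnion_ball hμ hs (m := μ univ / K)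
    (by simp [ENNReal.div_eq_zero_iff, hμ0, hK])
    (fun x => ENNReal.div_le_of_le_mul' (hKball x _ le_rfl))
  set n₀ := ⌈diam (univ : Set X) / s⌉₊
  -- `2` from recentring, `K ^ (1 / q)` from comparing the ball with `X`, `#N ^ (1 / q)` from the
  -- net, and `1 + n₀ (2 K)` from chains of at most `n₀` links.
  refine ⟨2 * (K ^ (1 / q) * ((N.card : ℝ≥0∞) ^ (1 / q) * (1 + n₀ * (2 * K)))), ?_,
    fun u hu Λ hΛ x₀ r hr => ?_⟩
  · have : 0 ≤ 1 / q := by positivity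
    finiteness
  set a := ⨍ y in ball x₀ s, u y ∂μ
  have hpiece : ∀ z ∈ N, avgPow μ (ball z s) (fun x => |u x - a|) q ≤ (1 + n₀ * (2 * K)) * Λ :=
    fun z _ => hX.avgPow_abs_sub_setAverage_ball_le hbdd hnt hs
      (fun z => hKball z s (by linarith)) hq hu hΛ z x₀
  have hr0 : 0 < r := hs.trans_le hr
  calc avgPow μ (ball x₀ r) (fun x => |u x - ⨍ y in ball x₀ r, u y ∂μ|) q
      ≤ 2 * avgPow μ (ball x₀ r) (fun x => |u x - a|) q :=
        avgPow_abs_sub_setAverage_le_two_mul hu.integrableOn (hnt x₀ r hr0).1.ne'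
          (hnt x₀ r hr0).2.ne hq a
    _ ≤ 2 * (K ^ (1 / q) * avgPow μ univ (fun x => |u x - a|) q) := by
        gcongr
        exact avgPow_le_rpow_mul_of_subset (by linarith) (subset_univ _) hμ0 hμ
          (hKball x₀ r (by linarith))
    _ ≤ 2 * (K ^ (1 / q) * ((N.card : ℝ≥0∞) ^ (1 / q) * ((1 + n₀ * (2 * K)) * Λ))) := by
        gcongr
        exact avgPow_univ_le_of_cover N hN (fun z _ => (hnt z s hs).2.ne) (by linarith) hpiece
    _ = _ := by ring

theorem PoincareOn.mono {c c' τ : ℝ} {x₀ : X} {r : ℝ} (h : PoincareOn μ p q c τ x₀ r)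
    (hc : c ≤ c') (hr : 0 ≤ r) : PoincareOn μ p q c' τ x₀ r := fun u g hug hu =>
  (h u g hug hu).trans (by gcongr)

theorem poincareOn_of_subsingleton [Subsingleton X]
    (hnt : ∀ (x : X) (r : ℝ), 0 < r → 0 < μ (ball x r) ∧ μ (ball x r) < ⊤) (hq : q ≠ 0)
    (c τ : ℝ) (x₀ : X) {r : ℝ} (hr : 0 < r) : PoincareOn μ p q c τ x₀ r := by
  intro u g _ _
  have hu : u = fun _ => u x₀ := funext fun x => congrArg u (Subsingleton.elim x x₀)
  rw [hu, setAverage_const (hnt x₀ r hr).1.ne' (hnt x₀ r hr).2.ne]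
  simp [avgPow_const hq (hnt x₀ r hr).1.ne' (hnt x₀ r hr).2.ne]

theorem PoincareOn.mono_dilation {c τ : ℝ} {x₀ : X} {r : ℝ} (h : PoincareOn μ p q c τ' x₀ r)
    (hp : 0 ≤ p) (hτ : τ' ≤ τ) (hr : 0 ≤ r) (h0 : μ (ball x₀ (τ * r)) ≠ 0)
    (hfin : μ (ball x₀ (τ * r)) ≠ ⊤) {K : ℝ≥0∞} (hK : K ≠ ⊤)
    (hμ : μ (ball x₀ (τ * r)) ≤ K * μ (ball x₀ (τ' * r))) :
    PoincareOn μ p q (c * (K ^ (1 / p)).toReal) τ x₀ r := fun u g hug hu => by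
  have hsub : ball x₀ (τ' * r) ⊆ ball x₀ (τ * r) := ball_subset_ball (by gcongr)
  calc _ ≤ ENNReal.ofReal (c * r) * avgPow μ (ball x₀ (τ' * r)) g p := h u g hug (hu.mono_set hsub)
    _ ≤ ENNReal.ofReal (c * r) * (K ^ (1 / p) * avgPow μ (ball x₀ (τ * r)) g p) := by
        gcongr
        exact avgPow_le_rpow_mul_of_subset hp hsub h0 hfin hμ
    _ = ENNReal.ofReal (c * (K ^ (1 / p)).toReal * r) * avgPow μ (ball x₀ (τ * r)) g p := by
        rw [mul_right_comm, ENNReal.ofReal_mul' ENNReal.toReal_nonneg,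
          ENNReal.ofReal_toReal (by finiteness), mul_assoc]

theorem IsGeodesicSpace.exists_poincareOn_of_ball_eq_univ [OpensMeasurableSpace X]
    (hX : IsGeodesicSpace X) (hbdd : Bornology.IsBounded (univ : Set X))
    (hnt : ∀ (x : X) (r : ℝ), 0 < r → 0 < μ (ball x r) ∧ μ (ball x r) < ⊤) (hC : C ≠ ⊤)
    (hdbl : ∀ (x : X) (r : ℝ), 0 < r → μ (ball x (2 * r)) ≤ C * μ (ball x r))
    (hp : 0 ≤ p) (hq : 1 ≤ q) (hτ' : 1 ≤ τ') {s : ℝ} (hs : 0 < s)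
    (hsmall : ∀ (w : X) (t : ℝ), s ≤ t → t ≤ 2 * s → PoincareOn μ p q c₀ τ' w t) :
    ∃ c₁ : ℝ, ∀ (x₀ : X) (r τ : ℝ), 2 * s ≤ r → ball x₀ (τ * r) = univ →
      PoincareOn μ p q c₁ τ x₀ r := by
  obtain ⟨K, hK, hKball⟩ := exists_measure_univ_le_mul_measure_ball hC hdbl hbdd hs
  obtain ⟨Ξ, hΞ, hosc⟩ := hX.exists_avgPow_abs_sub_setAverage_le hbdd hnt hC hdbl hq hs
  refine ⟨(Ξ * ENNReal.ofReal c₀ * K ^ (1 / p)).toReal, fun x₀ r τ hr huniv u g hug hu => ?_⟩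
  rw [huniv, integrableOn_univ] at hu
  rw [huniv]
  have hμ : μ univ ≠ ⊤ :=
    ne_top_of_le_ne_top (ENNReal.mul_ne_top hK (hnt x₀ s hs).2.ne) (hKball x₀ s le_rfl)
  have hμ0 : μ univ ≠ 0 := ((hnt x₀ s hs).1.trans_le (measure_mono (subset_univ _))).ne'
  set G := avgPow μ univ g p
  have hloc : ∀ (w : X) (t : ℝ), s ≤ t → t ≤ 2 * s →
      avgPow μ (ball w t) (fun x => |u x - ⨍ y in ball w t, u y ∂μ|) q ≤
        ENNReal.ofReal c₀ * ENNReal.ofReal r * (K ^ (1 / p) * G) := fun w t hst ht => by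
    have ht0 : 0 < t := hs.trans_le hst
    calc _ ≤ ENNReal.ofReal (c₀ * t) * avgPow μ (ball w (τ' * t)) g p :=
          hsmall w t hst ht u g hug hu.integrableOn
      _ ≤ ENNReal.ofReal c₀ * ENNReal.ofReal r * (K ^ (1 / p) * G) := by
          rw [ENNReal.ofReal_mul' ht0.le]
          gcongr
          · linarith
          · exact avgPow_le_rpow_mul_of_subset hp (subset_univ _) hμ0 hμ
              (hKball w _ (by nlinarith))
  calc _ ≤ Ξ * (ENNReal.ofReal c₀ * ENNReal.ofReal r * (K ^ (1 / p) * G)) :=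
        hosc u hu _ hloc x₀ r (by linarith)
    _ = ENNReal.ofReal ((Ξ * ENNReal.ofReal c₀ * K ^ (1 / p)).toReal * r) * G := by
        rw [ENNReal.ofReal_mul' (by linarith), ENNReal.ofReal_toReal (by finiteness)]
        ring

theorem IsGeodesicSpace.exists_poincareOn_of_isBounded [OpensMeasurableSpace X]
    (hX : IsGeodesicSpace X)
    (hbdd : ediam (univ : Set X) ≠ ⊤) (hD : ediam (univ : Set X) ≠ 0)
    (hnt : ∀ (x : X) (r : ℝ), 0 < r → 0 < μ (ball x r) ∧ μ (ball x r) < ⊤) (hC : C ≠ ⊤)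
    (hdbl : ∀ (x : X) (r : ℝ), 0 < r → μ (ball x (2 * r)) ≤ C * μ (ball x r))
    (hp : 0 ≤ p) (hq : 1 ≤ q) (hτ' : 1 ≤ τ') (hδ : 0 < δ)
    (hsmall : ∀ (x₀ : X) (r : ℝ), 0 < r →
      ENNReal.ofReal r ≤ ENNReal.ofReal δ * ediam (univ : Set X) → PoincareOn μ p q c₀ τ' x₀ r) :
    ∃ c_P > (0 : ℝ), ∃ τ ≥ (1 : ℝ), ∀ (x₀ : X) (r : ℝ), 0 < r → PoincareOn μ p q c_P τ x₀ r := by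
  have hbdd' : Bornology.IsBounded (univ : Set X) := isBounded_iff_ediam_ne_top.mpr hbdd
  set D := diam (univ : Set X)
  have hD0 : 0 < D := ENNReal.toReal_pos hD hbdd
  have hsmall' : ∀ (x₀ : X) (r : ℝ), 0 < r → r ≤ δ * D → PoincareOn μ p q c₀ τ' x₀ r :=
    fun x₀ r hr h => hsmall x₀ r hr (by
      rw [← ENNReal.ofReal_toReal hbdd, ← ENNReal.ofReal_mul hδ.le]
      exact ENNReal.ofReal_le_ofReal h)
  -- For `τ ≥ 2 / δ` the dilate of a ball of radius `r > δ diam X` is all of `X`.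
  set τ := max τ' (2 / δ)
  obtain ⟨K, hK, hdil⟩ := exists_measure_ball_mul_le hC hdbl (τ / τ')
  obtain ⟨c₁, hlarge⟩ := hX.exists_poincareOn_of_ball_eq_univ hbdd' hnt hC hdbl hp hq hτ'
    (s := δ * D / 2) (by positivity) fun w t hst ht =>
      hsmall' w t (lt_of_lt_of_le (by positivity) hst) (by linarith)
  refine ⟨max (max (c₀ * (K ^ (1 / p)).toReal) c₁) 1, lt_max_of_lt_right one_pos, τ,
    hτ'.trans (le_max_left _ _), fun x₀ r hr => ?_⟩
  by_cases hr' : r ≤ δ * D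
  · have hτr : 0 < τ * r := by positivity
    refine ((hsmall' x₀ r hr hr').mono_dilation hp (le_max_left _ _) hr.le (hnt x₀ _ hτr).1.ne'
      (hnt x₀ _ hτr).2.ne hK ?_).mono (le_max_of_le_left (le_max_left _ _)) hr.le
    have := hdil x₀ (τ' * r) (by positivity)
    rwa [← mul_assoc, div_mul_cancel₀ _ (by positivity : τ' ≠ 0)] at this
  · refine (hlarge x₀ r τ (by linarith) (eq_univ_of_forall fun y => mem_ball.mpr ?_)).mono
      (le_max_of_le_left (le_max_right _ _)) hr.le
    calc dist y x₀ ≤ D := dist_le_diam_of_mem hbdd' (mem_univ _) (mem_univ _)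
      _ < 2 / δ * (δ * D) := by field_simp; linarith
      _ ≤ τ * r := by gcongr; exacts [le_max_right _ _, (not_le.mp hr').le]

theorem IsGeodesicSpace.exists_poincareOn_of_poincareOn_small [OpensMeasurableSpace X]
    (hX : IsGeodesicSpace X)
    (hnt : ∀ (x : X) (r : ℝ), 0 < r → 0 < μ (ball x r) ∧ μ (ball x r) < ⊤) (hC : C ≠ ⊤)
    (hdbl : ∀ (x : X) (r : ℝ), 0 < r → μ (ball x (2 * r)) ≤ C * μ (ball x r))
    (hp : 0 ≤ p) (hq : 1 ≤ q) (hτ' : 1 ≤ τ') (hδ : 0 < δ)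
    (hsmall : ∀ (x₀ : X) (r : ℝ), 0 < r →
      ENNReal.ofReal r ≤ ENNReal.ofReal δ * ediam (univ : Set X) → PoincareOn μ p q c₀ τ' x₀ r) :
    ∃ c_P > (0 : ℝ), ∃ τ ≥ (1 : ℝ), ∀ (x₀ : X) (r : ℝ), 0 < r → PoincareOn μ p q c_P τ x₀ r := by
  rcases eq_or_ne (ediam (univ : Set X)) ⊤ with htop | hbdd
  · exact ⟨max c₀ 1, lt_max_of_lt_right one_pos, τ', hτ', fun x₀ r hr =>
      (hsmall x₀ r hr (by simp [htop, hδ])).mono (le_max_left _ _) hr.le⟩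
  rcases eq_or_ne (ediam (univ : Set X)) 0 with h0 | hD
  · have : Subsingleton X := subsingleton_univ_iff.mp (ediam_eq_zero_iff.mp h0)
    exact ⟨1, one_pos, 1, le_rfl, fun x₀ r hr =>
      poincareOn_of_subsingleton hnt (by linarith) 1 1 x₀ hr⟩
  exact hX.exists_poincareOn_of_isBounded hbdd hD hnt hC hdbl hp hq hτ' hδ hsmall

end MetricMeasure

theorem reverse_holder_implies_poincare_general
    {X : Type*} [MetricSpace X] [MeasurableSpace X] [BorelSpace X]
    (hgeo : IsGeodesicSpace X)
    (μ : Measure X) (c_μ : ℝ)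
    (hnt : ∀ (x : X) (r : ℝ), 0 < r → 0 < μ (ball x r) ∧ μ (ball x r) < ⊤)
    (hdbl : ∀ (x : X) (r : ℝ), 0 < r →
      μ (ball x (2 * r)) ≤ ENNReal.ofReal c_μ * μ (ball x r))
    (p q : ℝ) (hp : 1 ≤ p) (hq : 1 < q)
    (c τ' ε δ : ℝ) (hτ' : 1 ≤ τ') (hδ : 0 < δ)
    (hcontr : (1 + ε) * (1 / 2 : ℝ) ^ (1 - 1 / q) < 1)
    (hsmall : ∀ (x₀ : X) (r : ℝ), 0 < r →
      ENNReal.ofReal r ≤ ENNReal.ofReal δ * EMetric.diam (univ : Set X) →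
      ∀ u g : X → ℝ, IsUpperGradient u g → (∀ x, 0 ≤ u x) →
        IntegrableOn u (ball x₀ (τ' * r)) μ →
        avgPow μ (ball x₀ r) u q ≤
          ENNReal.ofReal (c * r) * avgPow μ (ball x₀ (τ' * r)) g p +
            ENNReal.ofReal ((1 + ε) * ⨍ x in ball x₀ r, u x ∂μ)) :
    ∃ c_P > (0:ℝ), ∃ τ ≥ (1:ℝ), ∀ (x₀ : X) (r : ℝ), 0 < r →
      PoincareOn μ p q c_P τ x₀ r :=
  hgeo.exists_poincareOn_of_poincareOn_small hnt ENNReal.ofReal_ne_top hdbl (by linarith)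
    hq.le hτ' hδ fun x₀ r hr hrδ =>
      poincareOn_of_forall_reverseHolderOn hr hτ' (hnt x₀ r hr).1.ne'
        (hnt x₀ _ (by positivity)).2.ne hq hcontr fun g v => hsmall x₀ r hr hrδ v g

/-- a reverse-Hölder type inequality with factor `(1+ε)(1/2)^{1-1/q} < 1`
on small balls implies a `(q,p)`-Poincaré inequality. -/
theorem reverse_holder_implies_poincare
    {X : Type*} [MetricSpace X] [CompleteSpace X] [MeasurableSpace X] [BorelSpace X]
    (hgeo : IsGeodesicSpace X)
    (μ : Measure X) (c_μ : ℝ) (hc : 1 ≤ c_μ)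
    (hnt : ∀ (x : X) (r : ℝ), 0 < r → 0 < μ (ball x r) ∧ μ (ball x r) < ⊤)
    (hdbl : ∀ (x : X) (r : ℝ), 0 < r →
      μ (ball x (2 * r)) ≤ ENNReal.ofReal c_μ * μ (ball x r))
    (p q : ℝ) (hp : 1 ≤ p) (hq : 1 < q)
    (c τ' ε δ : ℝ) (hcpos : 0 < c) (hτ' : 1 ≤ τ') (hε : 0 < ε) (hδ : 0 < δ)
    (hcontr : (1 + ε) * (1 / 2 : ℝ) ^ (1 - 1 / q) < 1)
    (hsmall : ∀ (x₀ : X) (r : ℝ), 0 < r →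
      ENNReal.ofReal r ≤ ENNReal.ofReal δ * EMetric.diam (univ : Set X) →
      ∀ u g : X → ℝ, IsUpperGradient u g → (∀ x, 0 ≤ u x) →
        IntegrableOn u (ball x₀ (τ' * r)) μ →
        avgPow μ (ball x₀ r) u q ≤
          ENNReal.ofReal (c * r) * avgPow μ (ball x₀ (τ' * r)) g p +
            ENNReal.ofReal ((1 + ε) * ⨍ x in ball x₀ r, u x ∂μ)) :
    ∃ c_P > (0:ℝ), ∃ τ ≥ (1:ℝ), ∀ (x₀ : X) (r : ℝ), 0 < r →
      PoincareOn μ p q c_P τ x₀ r :=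
  reverse_holder_implies_poincare_general hgeo μ c_μ hnt hdbl p q hp hq c τ' ε δ hτ' hδ hcontr
    hsmall
end

section
/- Assume \mu is doubling, 1 \leq p < \infty, 1 < q < \infty, a (q,p)-Poincar\'e inequality holds in (X,d,\mu), and let u \in N^{1,p}(X) satisfy \mu(\{|u| > 0\} \cap B(x_0,r)) \leq \gamma\, \mu(B(x_0,r)) for some 0 < \gamma < 1. Then there is a constant c depending on c_\mu, c_P, p, q, \gamma such that (\fint_{B(x_0,r)} |u|^q\,d\mu)^{1/q} \leq c\,r\,(\fint_{B(x_0,\tau r)} g_u^p\,d\mu)^{1/p}. -/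
open MeasureTheory Metric Set
open scoped ENNReal

/-!
Let `c` be the mean of `u` over `B = B(x₀,r)` and let `L`, `D` be the `L^q`-averages over `B` of
`u` and of `u - c`. Minkowski's inequality gives `L ≤ D + |c|`, and Hölder's inequality on the
support of `u`, which fills at most a fraction `γ` of `B`, gives `|c| ≤ γ^(1-1/q) L`. As
`γ^(1-1/q) < 1` this term is absorbed, `L ≤ D / (1 - γ^(1-1/q))`, and the Poincaré inequality
bounds `D`. Averages over `B` are integrals against the probability measure `μ[|B]`, so all of
this takes place in `L^q(μ[|B])`.
-/

open ProbabilityTheory Function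

theorem avgPow_abs_eq_eLpNorm'_cond {α : Type*} [MeasurableSpace α] (μ : Measure α) (s : Set α)
    (f : α → ℝ) (e : ℝ) : avgPow μ s (fun x => |f x|) e = eLpNorm' f e μ[|s] := by
  simp only [avgPow, eLpNorm'_eq_lintegral_enorm, ProbabilityTheory.cond, lintegral_smul_measure,
    Real.enorm_eq_ofReal_abs, ENNReal.div_eq_inv_mul, smul_eq_mul]

theorem setAverage_eq_integral_cond {α E : Type*} [MeasurableSpace α] [NormedAddCommGroup E]
    [NormedSpace ℝ E] (μ : Measure α) (s : Set α) (f : α → E) :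
    ⨍ x in s, f x ∂μ = ∫ x, f x ∂μ[|s] := by
  rw [average, ProbabilityTheory.cond, Measure.restrict_apply_univ]

theorem ProbabilityTheory.cond_le_of_measure_inter_le {α : Type*} [MeasurableSpace α]
    {μ : Measure α} {s t : Set α} {a : ℝ≥0∞} (hs : MeasurableSet s) (hs₀ : μ s ≠ 0)
    (hs_top : μ s ≠ ⊤) (h : μ (t ∩ s) ≤ a * μ s) : μ[t|s] ≤ a := by
  rwa [cond_apply hs, inter_comm, ENNReal.inv_mul_le_iff hs₀ hs_top, mul_comm]

theorem ENNReal.le_inv_one_sub_mul_of_le_add_mul {a b x : ℝ≥0∞} (ha : a < 1) (hx : x ≠ ⊤)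
    (h : x ≤ b + a * x) : x ≤ (1 - a)⁻¹ * b := by
  have hsub : (1 - a) * x ≤ b := by
    rw [ENNReal.sub_mul fun _ _ => hx, one_mul]
    exact tsub_le_iff_right.2 h
  exact (ENNReal.mul_le_iff_le_inv (tsub_pos_of_lt ha).ne' (ENNReal.sub_ne_top one_ne_top)).1 hsub

theorem ENNReal.inv_one_sub_ofReal_mul_ofReal {κ : ℝ} (a : ℝ) (hκ₀ : 0 ≤ κ) (hκ : κ < 1) :
    (1 - ENNReal.ofReal κ)⁻¹ * ENNReal.ofReal a = ENNReal.ofReal (a / (1 - κ)) := by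
  rw [← ENNReal.ofReal_one, ← ENNReal.ofReal_sub _ hκ₀, ← ENNReal.ofReal_inv_of_pos (sub_pos.2 hκ),
    ← ENNReal.ofReal_mul (inv_pos.2 (sub_pos.2 hκ)).le, inv_mul_eq_div]

section LpSeminorm

variable {α E : Type*} [MeasurableSpace α] [NormedAddCommGroup E] {μ : Measure α} {f : α → E}
  {q : ℝ}

theorem eLpNorm'_le_eLpNorm'_sub_const_add [IsProbabilityMeasure μ] (hq : 1 ≤ q)
    (hf : AEStronglyMeasurable f μ) (c : E) :
    eLpNorm' f q μ ≤ eLpNorm' (fun x => f x - c) q μ + ‖c‖ₑ :=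
  calc eLpNorm' f q μ = eLpNorm' ((fun x => f x - c) + fun _ => c) q μ := by
        congr 1; ext x; simp
    _ ≤ eLpNorm' (fun x => f x - c) q μ + eLpNorm' (fun _ => c) q μ :=
        eLpNorm'_add_le (hf.sub aestronglyMeasurable_const) aestronglyMeasurable_const hq
    _ = eLpNorm' (fun x => f x - c) q μ + ‖c‖ₑ := by
        rw [eLpNorm'_const c (by linarith), measure_univ, ENNReal.one_rpow, mul_one]

variable [NormedSpace ℝ E]

theorem enorm_integral_le_eLpNorm'_mul_measure_support_rpow (hq : 1 ≤ q)
    (hf : AEStronglyMeasurable f μ) :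
    ‖∫ x, f x ∂μ‖ₑ ≤ eLpNorm' f q μ * μ (support f) ^ (1 - 1 / q) :=
  calc ‖∫ x, f x ∂μ‖ₑ ≤ eLpNorm f 1 μ :=
        (enorm_integral_le_lintegral_enorm f).trans_eq eLpNorm_one_eq_lintegral_enorm.symm
    _ = eLpNorm' f 1 (μ.restrict (support f)) := by
        rw [← eLpNorm_restrict_eq_of_support_subset (s := support f) subset_rfl,
          eLpNorm_eq_eLpNorm' one_ne_zero ENNReal.one_ne_top, ENNReal.toReal_one]
    _ ≤ eLpNorm' f q (μ.restrict (support f)) * μ.restrict (support f) univ ^ (1 / 1 - 1 / q) :=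
        eLpNorm'_le_eLpNorm'_mul_rpow_measure_univ one_pos hq hf.restrict
    _ ≤ eLpNorm' f q μ * μ (support f) ^ (1 - 1 / q) := by
        rw [Measure.restrict_apply_univ, div_one]
        gcongr
        exact Measure.restrict_le_self

theorem eLpNorm'_le_inv_one_sub_mul_eLpNorm'_sub_integral [IsProbabilityMeasure μ] {δ : ℝ≥0∞}
    (hq : 1 ≤ q) (hf : Integrable f μ) (hsupp : μ (support f) ≤ δ) (hδ : δ ^ (1 - 1 / q) < 1) :
    eLpNorm' f q μ ≤ (1 - δ ^ (1 - 1 / q))⁻¹ * eLpNorm' (fun x => f x - ∫ y, f y ∂μ) q μ := by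
  have he : 0 ≤ 1 - 1 / q := sub_nonneg.2 ((div_le_one (by linarith)).2 hq)
  by_cases hD : eLpNorm' (fun x => f x - ∫ y, f y ∂μ) q μ = ⊤
  · rw [hD, ENNReal.mul_top (ENNReal.inv_ne_zero.2 (ENNReal.sub_ne_top ENNReal.one_ne_top))]
    exact le_top
  have hmink := eLpNorm'_le_eLpNorm'_sub_const_add hq hf.1 (∫ y, f y ∂μ)
  have hfin : eLpNorm' f q μ ≠ ⊤ :=
    ne_top_of_le_ne_top (ENNReal.add_ne_top.2 ⟨hD, enorm_ne_top⟩) hmink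
  refine ENNReal.le_inv_one_sub_mul_of_le_add_mul hδ hfin (hmink.trans ?_)
  gcongr
  calc ‖∫ y, f y ∂μ‖ₑ ≤ eLpNorm' f q μ * μ (support f) ^ (1 - 1 / q) :=
        enorm_integral_le_eLpNorm'_mul_measure_support_rpow hq hf.1
    _ ≤ δ ^ (1 - 1 / q) * eLpNorm' f q μ := by
        rw [mul_comm]
        gcongr

end LpSeminorm

theorem poincare_for_functions_vanishing_on_large_set_general
    {X : Type*} [MetricSpace X] [MeasurableSpace X] [BorelSpace X]
    (μ : Measure X)
    (hnt : ∀ (x : X) (r : ℝ), 0 < r → 0 < μ (ball x r) ∧ μ (ball x r) < ⊤)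
    (p q : ℝ) (hq : 1 < q)
    (c_P τ : ℝ) (hcP : 0 < c_P) (hτ : 1 ≤ τ)
    (hP : ∀ (x₀ : X) (r : ℝ), 0 < r → PoincareOn μ p q c_P τ x₀ r)
    (γ : ℝ) (hγ0 : 0 < γ) (hγ1 : γ < 1) :
    ∃ c > (0:ℝ), ∀ (x₀ : X) (r : ℝ) (u g : X → ℝ), 0 < r →
      IsUpperGradient u g → IntegrableOn u (ball x₀ (τ * r)) μ →
      μ ({x | u x ≠ 0} ∩ ball x₀ r) ≤ ENNReal.ofReal γ * μ (ball x₀ r) →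
      avgPow μ (ball x₀ r) (fun x => |u x|) q ≤
        ENNReal.ofReal (c * r) * avgPow μ (ball x₀ (τ * r)) g p := by
  have he : 0 < 1 - 1 / q := sub_pos.2 ((div_lt_one (by linarith)).2 hq)
  set κ := γ ^ (1 - 1 / q)
  have hκ : κ < 1 := Real.rpow_lt_one hγ0.le hγ1 he
  have hδ : ENNReal.ofReal γ ^ (1 - 1 / q) = ENNReal.ofReal κ :=
    ENNReal.ofReal_rpow_of_nonneg hγ0.le he.le
  refine ⟨c_P / (1 - κ), div_pos hcP (sub_pos.2 hκ), ?_⟩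
  intro x₀ r u g hr hug hint hsmall
  obtain ⟨hB₀, hB_top⟩ := hnt x₀ r hr
  have := cond_isProbabilityMeasure_of_finite hB₀.ne' hB_top.ne
  have hu : Integrable u μ[|ball x₀ r] :=
    (hint.mono_set (ball_subset_ball (le_mul_of_one_le_left hr.le hτ))).integrable.smul_measure
      (ENNReal.inv_ne_top.2 hB₀.ne')
  have hsupp : μ[support u|ball x₀ r] ≤ ENNReal.ofReal γ :=
    cond_le_of_measure_inter_le measurableSet_ball hB₀.ne' hB_top.ne hsmall
  have hpoinc := hP x₀ r hr u g hug hint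
  rw [avgPow_abs_eq_eLpNorm'_cond μ _ (fun x => u x - _), setAverage_eq_integral_cond] at hpoinc
  rw [avgPow_abs_eq_eLpNorm'_cond, div_mul_eq_mul_div,
    ← ENNReal.inv_one_sub_ofReal_mul_ofReal _ (by positivity) hκ, mul_assoc, ← hδ]
  calc eLpNorm' u q μ[|ball x₀ r]
      ≤ (1 - ENNReal.ofReal γ ^ (1 - 1 / q))⁻¹ *
          eLpNorm' (fun x => u x - ∫ y, u y ∂μ[|ball x₀ r]) q μ[|ball x₀ r] :=
        eLpNorm'_le_inv_one_sub_mul_eLpNorm'_sub_integral hq.le hu hsupp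
          (hδ ▸ ENNReal.ofReal_lt_one.2 hκ)
    _ ≤ _ := by gcongr

/-- under doubling and a `(q,p)`-Poincaré inequality, a function vanishing
on a large portion of a ball satisfies the Sobolev-type inequality
`(⨍_B |u|^q)^{1/q} ≤ c r (⨍_{τB} g_u^p)^{1/p}`. -/
theorem poincare_for_functions_vanishing_on_large_set
    {X : Type*} [MetricSpace X] [MeasurableSpace X] [BorelSpace X]
    (μ : Measure X) (c_μ : ℝ) (hc : 1 ≤ c_μ)
    (hnt : ∀ (x : X) (r : ℝ), 0 < r → 0 < μ (ball x r) ∧ μ (ball x r) < ⊤)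
    (hdbl : ∀ (x : X) (r : ℝ), 0 < r →
      μ (ball x (2 * r)) ≤ ENNReal.ofReal c_μ * μ (ball x r))
    (p q : ℝ) (hp : 1 ≤ p) (hq : 1 < q)
    (c_P τ : ℝ) (hcP : 0 < c_P) (hτ : 1 ≤ τ)
    (hP : ∀ (x₀ : X) (r : ℝ), 0 < r → PoincareOn μ p q c_P τ x₀ r)
    (γ : ℝ) (hγ0 : 0 < γ) (hγ1 : γ < 1) :
    ∃ c > (0:ℝ), ∀ (x₀ : X) (r : ℝ) (u g : X → ℝ), 0 < r →
      IsUpperGradient u g → IntegrableOn u (ball x₀ (τ * r)) μ →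
      μ ({x | u x ≠ 0} ∩ ball x₀ r) ≤ ENNReal.ofReal γ * μ (ball x₀ r) →
      avgPow μ (ball x₀ r) (fun x => |u x|) q ≤
        ENNReal.ofReal (c * r) * avgPow μ (ball x₀ (τ * r)) g p :=
  poincare_for_functions_vanishing_on_large_set_general μ hnt p q hq c_P τ hcP hτ hP γ hγ0 hγ1
end
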